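/- arXiv:1711.07747 — 4 statements merged into one kernel-verified Lean document; each statement's English description precedes it below -/
import Mathlib

section
/- If S = [[A,B],[C,D]] is a real antisymplectic 2n×2n matrix (SᵀJS = -J) and Z ∈ 𝒮ₙ, then Φ_S(Z) = (AZ+B)(CZ+D)⁻¹ is symmetric with negative definite imaginary part, i.e., Φ_S(Z) ∈ 𝒮̄ₙ. -/
open Matrix

noncomputable section

/-- The standard symplectic form matrix over ℂ. -/
def J (n : ℕ) : Matrix (Fin n ⊕ Fin n) (Fin n ⊕ Fin n) ℂ :=
  Matrix.fromBlocks 0 1 (-1) 0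

/-- The standard symplectic form matrix over ℝ. -/
def JR (n : ℕ) : Matrix (Fin n ⊕ Fin n) (Fin n ⊕ Fin n) ℝ :=
  Matrix.fromBlocks 0 1 (-1) 0

/-- Membership in the Siegel upper half space: symmetric with positive definite
imaginary part. -/
def InSiegel {n : ℕ} (Z : Matrix (Fin n) (Fin n) ℂ) : Prop :=
  Zᵀ = Z ∧ (Z.map Complex.im).PosDef

/-- Membership in the lower Siegel space: symmetric with negative definite
imaginary part. -/
def InSiegelBar {n : ℕ} (Z : Matrix (Fin n) (Fin n) ℂ) : Prop :=
  Zᵀ = Z ∧ (-(Z.map Complex.im)).PosDef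

/-- The generalized linear fractional transformation Φ. -/
def Phi {n : ℕ} (A B C D Z : Matrix (Fin n) (Fin n) ℂ) : Matrix (Fin n) (Fin n) ℂ :=
  (A * Z + B) * (C * Z + D)⁻¹

/-- The ℓ²-operator norm of a complex matrix. -/
def opNorm {n : ℕ} (M : Matrix (Fin n) (Fin n) ℂ) : ℝ :=
  ‖Matrix.toEuclideanCLM (𝕜 := ℂ) (n := Fin n) M‖

/-! With `P = AZ + B` and `Q = CZ + D`, the block relations of `SᵀJS = -J` give
`(AW + B)ᵀ(CZ + D) - (CW + D)ᵀ(AZ + B) = Z - Wᵀ` for all `W`, `Z`. Taking `W = Z` gives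
`PᵀQ = QᵀP`, so `PQ⁻¹` is symmetric. Taking `W = Z̄` gives `PᴴQ - QᴴP = Z - Zᴴ = 2i Im Z`: a kernel
vector of `Q` would be isotropic for the positive definite `Im Z`, so `Q` is invertible, and then
`Im (PQ⁻¹) = -(Q⁻¹)ᴴ (Im Z) Q⁻¹` is negative definite. -/

open scoped ComplexOrder

section Antisymplectic

variable {m R S : Type*} [Fintype m] [DecidableEq m] [CommRing R] [CommRing S]

def IsAntisymplectic (M : Matrix (m ⊕ m) (m ⊕ m) R) : Prop :=
  Mᵀ * fromBlocks 0 1 (-1) 0 * M = -fromBlocks 0 1 (-1) 0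

theorem IsAntisymplectic.map {M : Matrix (m ⊕ m) (m ⊕ m) R} (hM : IsAntisymplectic M)
    (f : R →+* S) : IsAntisymplectic (M.map f) := by
  have h := congrArg (Matrix.map · f) hM
  simpa [IsAntisymplectic, Matrix.map_mul, Matrix.map_neg _ (map_neg f), Matrix.fromBlocks_map,
    Matrix.transpose_map] using h

theorem IsAntisymplectic.blocks {A B C D : Matrix m m R}
    (h : IsAntisymplectic (fromBlocks A B C D)) :
    Aᵀ * C = Cᵀ * A ∧ Aᵀ * D - Cᵀ * B = -1 ∧ Bᵀ * C - Dᵀ * A = 1 ∧ Bᵀ * D = Dᵀ * B := by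
  rw [IsAntisymplectic, fromBlocks_transpose, fromBlocks_multiply, fromBlocks_multiply,
    fromBlocks_neg, fromBlocks_inj] at h
  simp only [Matrix.mul_zero, Matrix.mul_one, Matrix.mul_neg, Matrix.neg_mul, zero_add, add_zero,
    neg_zero, neg_neg, neg_add_eq_sub] at h
  obtain ⟨hAC, hAD, hBC, hBD⟩ := h
  exact ⟨sub_eq_zero.mp hAC, hAD, hBC, sub_eq_zero.mp hBD⟩

theorem IsAntisymplectic.transpose_mul_sub_transpose_mul {A B C D : Matrix m m R}
    (h : IsAntisymplectic (fromBlocks A B C D)) (W Z : Matrix m m R) :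
    (A * W + B)ᵀ * (C * Z + D) - (C * W + D)ᵀ * (A * Z + B) = Z - Wᵀ := by
  obtain ⟨hAC, hAD, hBC, hBD⟩ := h.blocks
  calc (A * W + B)ᵀ * (C * Z + D) - (C * W + D)ᵀ * (A * Z + B)
      = Wᵀ * (Aᵀ * C - Cᵀ * A) * Z + Wᵀ * (Aᵀ * D - Cᵀ * B) + (Bᵀ * C - Dᵀ * A) * Z
          + (Bᵀ * D - Dᵀ * B) := by
        simp only [transpose_add, transpose_mul]; noncomm_ring
    _ = Z - Wᵀ := by
        rw [hAC, hBD, sub_self, sub_self, hAD, hBC]; noncomm_ring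

end Antisymplectic

section RealMatrix

variable {m : Type*} [Fintype m]

open Complex

theorem star_dotProduct_map_ofReal_mulVec {M : Matrix m m ℝ} (hM : Mᵀ = M) (v : m → ℂ) :
    star v ⬝ᵥ (M.map ofReal *ᵥ v) =
      ↑((re ∘ v) ⬝ᵥ M *ᵥ (re ∘ v) + (im ∘ v) ⬝ᵥ M *ᵥ (im ∘ v)) := by
  have hcast (a b : m → ℝ) : ofReal ∘ a ⬝ᵥ (M.map ofReal *ᵥ ofReal ∘ b) = ↑(a ⬝ᵥ M *ᵥ b) := by
    rw [show M.map ofReal *ᵥ ofReal ∘ b = ofReal ∘ (M *ᵥ b) from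
      funext fun i => (ofRealHom.map_mulVec M b i).symm]
    exact (ofRealHom.map_dotProduct a _).symm
  have hstar (a : m → ℝ) : star (ofReal ∘ a) = ofReal ∘ a := by
    ext i; simp
  have hv : v = ofReal ∘ (re ∘ v) + I • ofReal ∘ (im ∘ v) := by
    ext i; simp [mul_comm I]
  set x := re ∘ v
  set y := im ∘ v
  have hswap : y ⬝ᵥ M *ᵥ x = x ⬝ᵥ M *ᵥ y := by
    rw [dotProduct_mulVec, ← mulVec_transpose, hM, dotProduct_comm]
  rw [hv]
  simp only [star_add, star_smul, hstar, mulVec_add, mulVec_smul, dotProduct_add, add_dotProduct,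
    dotProduct_smul, smul_dotProduct, hcast, hswap, smul_eq_mul, RCLike.star_def, conj_I]
  push_cast
  linear_combination (-(↑(y ⬝ᵥ M *ᵥ y) : ℂ)) * I_sq

theorem posDef_map_ofReal_iff {M : Matrix m m ℝ} : (M.map ofReal).PosDef ↔ M.PosDef := by
  have hherm : (M.map ofReal).IsHermitian ↔ M.IsHermitian :=
    isHermitian_map_iff (fun x => (conj_ofReal x).symm) ofReal_injective
  simp only [posDef_iff_dotProduct_mulVec, hherm, star_trivial, and_congr_right_iff]
  intro hM
  have hMt : Mᵀ = M := (isHermitian_iff_isSymm.mp hM).eq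
  constructor
  · intro h x hx
    have hx' : ofReal ∘ x ≠ 0 := fun h0 => hx (funext fun i => ofReal_injective (congrFun h0 i))
    simpa [star_dotProduct_map_ofReal_mulVec hMt, Function.comp_def] using h hx'
  · intro h v hv
    have hpos (a : m → ℝ) : 0 ≤ a ⬝ᵥ M *ᵥ a := by
      rcases eq_or_ne a 0 with rfl | ha
      · simp
      · exact (h ha).le
    rw [star_dotProduct_map_ofReal_mulVec hMt, zero_lt_real]
    by_cases hre : re ∘ v = 0
    · have him : im ∘ v ≠ 0 := fun him =>
        hv (funext fun i => Complex.ext (congrFun hre i) (congrFun him i))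
      linarith [h him, hpos (re ∘ v)]
    · linarith [h hre, hpos (im ∘ v)]

end RealMatrix

section Fractional

variable {m R : Type*} [Fintype m] [DecidableEq m]

theorem isUnit_of_conjTranspose_mul_sub_eq_smul [Field R] [PartialOrder R] [StarRing R]
    {P Q M : Matrix m m R} (hM : M.PosDef) {c : R} (hc : c ≠ 0)
    (h : Pᴴ * Q - Qᴴ * P = c • M) : IsUnit Q := by
  rw [isUnit_iff_isUnit_det, isUnit_iff_ne_zero]
  intro hdet
  obtain ⟨v, hv, hQv⟩ := exists_mulVec_eq_zero_iff.mpr hdet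
  have hzero : star v ⬝ᵥ ((Pᴴ * Q - Qᴴ * P) *ᵥ v) = 0 := by
    rw [sub_mulVec, ← mulVec_mulVec, ← mulVec_mulVec, hQv, mulVec_zero, dotProduct_sub,
      dotProduct_mulVec (star v), ← star_mulVec, hQv]
    simp
  rw [h, smul_mulVec, dotProduct_smul, smul_eq_mul] at hzero
  exact mul_ne_zero hc (hM.dotProduct_mulVec_pos hv).ne' hzero

variable [CommRing R]

theorem transpose_mul_inv_of_transpose_mul_eq {P Q : Matrix m m R} (hQ : IsUnit Q)
    (h : Pᵀ * Q = Qᵀ * P) : (P * Q⁻¹)ᵀ = P * Q⁻¹ := by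
  have hdet : IsUnit Q.det := (isUnit_iff_isUnit_det Q).mp hQ
  calc (P * Q⁻¹)ᵀ = (Qᵀ)⁻¹ * (Pᵀ * Q) * Q⁻¹ := by
        rw [transpose_mul, transpose_nonsing_inv, Matrix.mul_assoc, Matrix.mul_assoc,
          mul_nonsing_inv _ hdet, Matrix.mul_one]
    _ = P * Q⁻¹ := by
        rw [h, ← Matrix.mul_assoc, nonsing_inv_mul _ (by rwa [det_transpose]), Matrix.one_mul]

theorem mul_inv_sub_conjTranspose [StarRing R] {P Q : Matrix m m R} (hQ : IsUnit Q) :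
    P * Q⁻¹ - (P * Q⁻¹)ᴴ = (Q⁻¹)ᴴ * (Qᴴ * P - Pᴴ * Q) * Q⁻¹ := by
  have hdet : IsUnit Q.det := (isUnit_iff_isUnit_det Q).mp hQ
  have hleft : (Q⁻¹)ᴴ * Qᴴ = 1 := by
    rw [← conjTranspose_mul, mul_nonsing_inv _ hdet, conjTranspose_one]
  rw [Matrix.mul_sub, Matrix.sub_mul, ← Matrix.mul_assoc, hleft, Matrix.one_mul,
    Matrix.mul_assoc, Matrix.mul_assoc, mul_nonsing_inv _ hdet, Matrix.mul_one,
    conjTranspose_mul]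

end Fractional

section Siegel

variable {m : Type*}

open Complex

theorem sub_conjTranspose_eq_smul_map_im {W : Matrix m m ℂ} (hW : Wᵀ = W) :
    W - Wᴴ = (2 * I) • (W.map im).map ofReal := by
  ext i j
  have hji : W j i = W i j := congrFun (congrFun hW i) j
  simp only [Matrix.sub_apply, conjTranspose_apply, hji, RCLike.star_def, sub_conj,
    Matrix.smul_apply, map_apply, smul_eq_mul]
  push_cast
  ring

variable [Fintype m]

theorem conjTranspose_map_ofReal_mul_add (A B : Matrix m m ℝ) (W : Matrix m m ℂ) :
    (A.map ofReal * W + B.map ofReal)ᴴ = (A.map ofReal * W.map star + B.map ofReal)ᵀ := by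
  ext i j
  simp [mul_apply, mul_comm]

variable [DecidableEq m]

theorem map_ofReal_neg_map_im_mul_inv {P Q Y : Matrix m m ℂ} (hQ : IsUnit Q)
    (hsymm : (P * Q⁻¹)ᵀ = P * Q⁻¹) (h : Pᴴ * Q - Qᴴ * P = (2 * I) • Y) :
    (-((P * Q⁻¹).map im)).map ofReal = (Q⁻¹)ᴴ * Y * Q⁻¹ := by
  have h2I : (2 * I) ≠ 0 := mul_ne_zero two_ne_zero I_ne_zero
  apply smul_right_injective _ h2I
  calc (2 * I) • (-((P * Q⁻¹).map im)).map ofReal = -(P * Q⁻¹ - (P * Q⁻¹)ᴴ) := by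
        rw [sub_conjTranspose_eq_smul_map_im hsymm, Matrix.map_neg _ (by simp)]; simp
    _ = (Q⁻¹)ᴴ * ((2 * I) • Y) * Q⁻¹ := by
        rw [mul_inv_sub_conjTranspose hQ, ← h, ← neg_sub (Qᴴ * P), Matrix.mul_neg, Matrix.neg_mul]
    _ = (2 * I) • ((Q⁻¹)ᴴ * Y * Q⁻¹) := by
        rw [Matrix.mul_smul, Matrix.smul_mul]

end Siegel

open Complex in
theorem stmt3 (n : ℕ) (A B C D : Matrix (Fin n) (Fin n) ℝ)
    (hS : (Matrix.fromBlocks A B C D)ᵀ * JR n * Matrix.fromBlocks A B C D = -(JR n))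
    (Z : Matrix (Fin n) (Fin n) ℂ) (hZ : InSiegel Z) :
    InSiegelBar (Phi (A.map Complex.ofReal) (B.map Complex.ofReal) (C.map Complex.ofReal)
      (D.map Complex.ofReal) Z) := by
  obtain ⟨hZt, hY⟩ := hZ
  have hYc := posDef_map_ofReal_iff.mpr hY
  unfold Phi
  have hS' : IsAntisymplectic
      (fromBlocks (A.map ofReal) (B.map ofReal) (C.map ofReal) (D.map ofReal)) := by
    rw [← fromBlocks_map]
    exact (show IsAntisymplectic (fromBlocks A B C D) from hS).map ofRealHom
  set P := A.map ofReal * Z + B.map ofReal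
  set Q := C.map ofReal * Z + D.map ofReal
  have hT : Pᵀ * Q = Qᵀ * P :=
    sub_eq_zero.mp (by rw [hS'.transpose_mul_sub_transpose_mul, hZt, sub_self])
  have hH : Pᴴ * Q - Qᴴ * P = (2 * I) • (Z.map im).map ofReal := by
    rw [conjTranspose_map_ofReal_mul_add, conjTranspose_map_ofReal_mul_add,
      hS'.transpose_mul_sub_transpose_mul, ← sub_conjTranspose_eq_smul_map_im hZt]
    rfl
  have hQ : IsUnit Q :=
    isUnit_of_conjTranspose_mul_sub_eq_smul hYc (mul_ne_zero two_ne_zero I_ne_zero) hH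
  have hΦt : (P * Q⁻¹)ᵀ = P * Q⁻¹ := transpose_mul_inv_of_transpose_mul_eq hQ hT
  refine ⟨hΦt, posDef_map_ofReal_iff.mp ?_⟩
  rw [map_ofReal_neg_map_im_mul_inv hQ hΦt hH, ← star_eq_conjTranspose]
  exact (isUnit_nonsing_inv_iff.mpr hQ).posDef_star_left_conjugate_iff.mpr hYc

end
end

section
/- For every Z ∈ 𝒮̄ₙ there exists a real antisymplectic matrix S (SᵀJS = -J) with Φ_S(iIₙ) = Z; explicitly, for Z = X + iY with Y negative definite, S = [[-√(-Y), X√((-Y)⁻¹)],[0, √((-Y)⁻¹)]] works. -/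
open Matrix

noncomputable section

open scoped ComplexOrder in
/-- The square root of a positive semidefinite matrix, as defined in the older Mathlib
(removed since). -/
def Matrix.PosSemidef.sqrt {n : Type*} [Fintype n] [DecidableEq n] {𝕜 : Type*} [RCLike 𝕜]
    {A : Matrix n n 𝕜} (hA : A.PosSemidef) : Matrix n n 𝕜 :=
  hA.1.eigenvectorUnitary.1 * diagonal ((↑) ∘ (√·) ∘ hA.1.eigenvalues) *
  (star hA.1.eigenvectorUnitary : Matrix n n 𝕜)

/-!
Write `Y = Im Z` and `R = √(-Y)`. The matrix `S` is block upper triangular with diagonal blocks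
`-R` and `R⁻¹`, so `SᵀJS = -J` reduces to `(-R)ᵀR⁻¹ = -1` together with the symmetry of
`(XR⁻¹)ᵀR⁻¹ = R⁻¹XR⁻¹`. Since the lower left block vanishes,
`Φ_S(iI) = (-iR + XR⁻¹)R = X - iR² = X + iY = Z`.
-/

section Sqrt

open scoped MatrixOrder ComplexOrder

variable {m : Type*} [Fintype m] [DecidableEq m] {𝕜 : Type*} [RCLike 𝕜] {A : Matrix m m 𝕜}

theorem Matrix.PosSemidef.sqrt_eq_cfcSqrt (hA : A.PosSemidef) : hA.sqrt = CFC.sqrt A := by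
  rw [CFC.sqrt_eq_cfc, cfc_nnreal_eq_real _ A, hA.1.cfc_eq]
  simp only [IsHermitian.cfc, Matrix.PosSemidef.sqrt, Unitary.conjStarAlgAut_apply]
  congr 3
  funext i
  simp [Real.coe_sqrt, Real.coe_toNNReal', hA.eigenvalues_nonneg i]

theorem Matrix.PosSemidef.sqrt_mul_self (hA : A.PosSemidef) : hA.sqrt * hA.sqrt = A := by
  rw [hA.sqrt_eq_cfcSqrt]
  exact CFC.sqrt_mul_sqrt_self A hA.nonneg

theorem Matrix.PosSemidef.isHermitian_sqrt (hA : A.PosSemidef) : hA.sqrt.IsHermitian := by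
  rw [hA.sqrt_eq_cfcSqrt]
  exact (CFC.sqrt_nonneg A).posSemidef.isHermitian

theorem Matrix.PosDef.isUnit_det_sqrt (hA : A.PosDef) : IsUnit hA.posSemidef.sqrt.det := by
  rw [← isUnit_iff_isUnit_det, hA.posSemidef.sqrt_eq_cfcSqrt,
    CFC.isUnit_sqrt_iff A hA.posSemidef.nonneg]
  exact hA.isUnit

theorem Matrix.PosDef.sqrt_inv (hA : A.PosDef) :
    hA.inv.posSemidef.sqrt = hA.posSemidef.sqrt⁻¹ := by
  rw [hA.posSemidef.sqrt_eq_cfcSqrt, hA.inv.posSemidef.sqrt_eq_cfcSqrt, hA.posSemidef.inv_sqrt]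

end Sqrt

theorem fromBlocks_zero₂₁_transpose_mul_JR_mul {n : ℕ} {A B D : Matrix (Fin n) (Fin n) ℝ}
    (hAD : Aᵀ * D = -1) (hBD : Bᵀ * D = Dᵀ * B) :
    (fromBlocks A B 0 D)ᵀ * JR n * fromBlocks A B 0 D = -JR n := by
  have hDA : Dᵀ * A = -1 := by
    rw [← transpose_transpose A, ← transpose_mul, hAD, transpose_neg, transpose_one]
  simp only [JR, fromBlocks_transpose, fromBlocks_multiply, fromBlocks_neg, transpose_zero,
    Matrix.mul_zero, Matrix.zero_mul, Matrix.mul_one, Matrix.mul_neg, Matrix.neg_mul, add_zero,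
    zero_add, neg_zero, neg_neg, hAD, hDA, hBD, neg_add_cancel]

theorem Phi_zero_left {n : ℕ} (A B D Z : Matrix (Fin n) (Fin n) ℂ) :
    Phi A B 0 D Z = (A * Z + B) * D⁻¹ := by
  rw [Phi, Matrix.zero_mul, zero_add]

theorem Matrix.map_re_add_I_smul_map_im {m : Type*} (Z : Matrix m m ℂ) :
    (Z.map Complex.re).map Complex.ofReal + Complex.I • (Z.map Complex.im).map Complex.ofReal =
      Z := by
  ext i j
  simp [mul_comm Complex.I]

theorem Phi_I_smul_one_of_mul_self_eq_neg {n : ℕ} {R X Y : Matrix (Fin n) (Fin n) ℝ}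
    (hR : IsUnit R.det) (hRR : R * R = -Y) :
    Phi ((-R).map Complex.ofReal) ((X * R⁻¹).map Complex.ofReal)
        ((0 : Matrix (Fin n) (Fin n) ℝ).map Complex.ofReal) (R⁻¹.map Complex.ofReal)
        (Complex.I • 1) =
      X.map Complex.ofReal + Complex.I • Y.map Complex.ofReal := by
  let ι := (Complex.ofRealHom : ℝ →+* ℂ).mapMatrix (m := Fin n)
  have hinv : (ι R⁻¹)⁻¹ = ι R := inv_eq_left_inv (by rw [← map_mul, mul_nonsing_inv R hR, map_one])
  change Phi (ι (-R)) (ι (X * R⁻¹)) (ι 0) (ι R⁻¹) _ = ι X + Complex.I • ι Y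
  rw [map_zero, Phi_zero_left, hinv, Matrix.add_mul, Matrix.mul_smul, Matrix.mul_one,
    Matrix.smul_mul, ← map_mul, ← map_mul, Matrix.neg_mul, hRR, neg_neg, Matrix.mul_assoc,
    nonsing_inv_mul R hR, Matrix.mul_one, add_comm]

theorem stmt4 (n : ℕ) (Z : Matrix (Fin n) (Fin n) ℂ) (hsym : Zᵀ = Z)
    (hY : (-(Z.map Complex.im)).PosDef) :
    ∃ A B C D : Matrix (Fin n) (Fin n) ℝ,
      A = -hY.posSemidef.sqrt ∧ B = Z.map Complex.re * hY.inv.posSemidef.sqrt ∧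
      C = 0 ∧ D = hY.inv.posSemidef.sqrt ∧
      (Matrix.fromBlocks A B C D)ᵀ * JR n * Matrix.fromBlocks A B C D = -(JR n) ∧
      Phi (A.map Complex.ofReal) (B.map Complex.ofReal) (C.map Complex.ofReal)
        (D.map Complex.ofReal) (Complex.I • 1) = Z := by
  set R := hY.posSemidef.sqrt
  set X := Z.map Complex.re
  have hR : IsUnit R.det := hY.isUnit_det_sqrt
  have hRsymm : Rᵀ = R := hY.posSemidef.isHermitian_sqrt
  have hXsymm : Xᵀ = X := by rw [← transpose_map, hsym]
  refine ⟨_, _, _, _, rfl, rfl, rfl, rfl, ?_, ?_⟩ <;> rw [hY.sqrt_inv]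
  · apply fromBlocks_zero₂₁_transpose_mul_JR_mul
    · rw [transpose_neg, hRsymm, Matrix.neg_mul, mul_nonsing_inv R hR]
    · rw [transpose_mul, hXsymm, transpose_nonsing_inv, hRsymm, Matrix.mul_assoc]
  · rw [Phi_I_smul_one_of_mul_self_eq_neg hR hY.posSemidef.sqrt_mul_self,
      Matrix.map_re_add_I_smul_map_im]
end
end

section
/- Let S = [[A,B],[C,D]] ∈ SP₂ₙ(ℂ) with i(S*JS - J) ≥ 0 (positive semidefinite), and Z ∈ 𝒮ₙ. Setting E = AZ+B and F = CZ+D, the matrix (1/i)(F*E - E*F) is positive definite. -/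
open Matrix
open scoped ComplexOrder

noncomputable section

/-
Write `W = [Z; 1]`, so that `S W = [E; F]`. For the form `⟨X, Y⟩ = Xᴴ J Y` one has
`⟨[E; F], [E; F]⟩ = EᴴF - FᴴE` and `⟨W, W⟩ = Zᴴ - Z`, hence
`(1/i)(FᴴE - EᴴF) = (1/i)(Z - Zᴴ) + Wᴴ (i (SᴴJS - J)) W`.
For symmetric `Z` the first summand is `2 Im Z`, which is positive definite, and the second
is a congruence of a positive semidefinite matrix.
-/

namespace Matrix

lemma PosDef.map_ofReal {ι : Type*} [Fintype ι] [DecidableEq ι] {R : Matrix ι ι ℝ}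
    (hR : R.PosDef) : (R.map Complex.ofReal).PosDef := by
  have hsemidef : (R.map Complex.ofReal).PosSemidef := by
    obtain ⟨S, rfl⟩ : ∃ S : Matrix ι ι ℝ, R = star S * S := by
      open scoped MatrixOrder in
      exact CStarAlgebra.nonneg_iff_eq_star_mul_self.mp hR.posSemidef.nonneg
    have hmap : (star S * S).map Complex.ofReal
        = (S.map Complex.ofReal)ᴴ * S.map Complex.ofReal := by
      ext i j
      simp [Matrix.mul_apply, Matrix.conjTranspose_apply]
    rw [hmap]
    exact posSemidef_conjTranspose_mul_self _
  exact hsemidef.posDef_iff_isUnit.mpr (hR.isUnit.map Complex.ofRealHom.mapMatrix)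

lemma inv_I_smul_sub_conjTranspose_of_transpose_eq {ι : Type*} {Z : Matrix ι ι ℂ}
    (hZ : Zᵀ = Z) :
    Complex.I⁻¹ • (Z - Zᴴ) = ((2 : ℝ) • Z.map Complex.im).map Complex.ofReal := by
  ext i j
  have hji : Z j i = Z i j := by simpa using congrFun (congrFun hZ i) j
  apply Complex.ext <;> simp [hji, Complex.inv_I]; ring

end Matrix

lemma conjTranspose_fromRows_mul_J_mul_fromRows {n : ℕ} {m : Type*}
    (E F : Matrix (Fin n) m ℂ) :
    (fromRows E F)ᴴ * J n * fromRows E F = Eᴴ * F - Fᴴ * E := by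
  rw [conjTranspose_fromRows_eq_fromCols_conjTranspose, _root_.J, Matrix.mul_assoc,
    fromBlocks_mul_fromRows, fromCols_mul_fromRows]
  simp [sub_eq_add_neg]

lemma InSiegel.posDef_inv_I_smul_sub_conjTranspose {n : ℕ} {Z : Matrix (Fin n) (Fin n) ℂ}
    (hZ : InSiegel Z) : (Complex.I⁻¹ • (Z - Zᴴ)).PosDef := by
  rw [inv_I_smul_sub_conjTranspose_of_transpose_eq hZ.1]
  exact (hZ.2.smul two_pos).map_ofReal

lemma inv_I_smul_sub_eq_add_conjTranspose_mul_mul {n : ℕ} (A B C D Z : Matrix (Fin n) (Fin n) ℂ) :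
    Complex.I⁻¹ • ((C * Z + D)ᴴ * (A * Z + B) - (A * Z + B)ᴴ * (C * Z + D))
      = Complex.I⁻¹ • (Z - Zᴴ) + (fromRows Z 1 : Matrix (Fin n ⊕ Fin n) (Fin n) ℂ)ᴴ
        * (Complex.I • ((fromBlocks A B C D)ᴴ * J n * fromBlocks A B C D - J n))
        * (fromRows Z 1 : Matrix (Fin n ⊕ Fin n) (Fin n) ℂ) := by
  set W : Matrix (Fin n ⊕ Fin n) (Fin n) ℂ := fromRows Z 1
  set S := fromBlocks A B C D
  have hSW : S * W = fromRows (A * Z + B) (C * Z + D) := by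
    simp [S, W, fromBlocks_mul_fromRows]
  have hform : Wᴴ * (Sᴴ * J n * S) * W
      = (A * Z + B)ᴴ * (C * Z + D) - (C * Z + D)ᴴ * (A * Z + B) := by
    rw [← conjTranspose_fromRows_mul_J_mul_fromRows, ← hSW]
    simp only [conjTranspose_mul, Matrix.mul_assoc]
  have hJ : Wᴴ * J n * W = Zᴴ - Z := by
    simpa using conjTranspose_fromRows_mul_J_mul_fromRows Z 1
  rw [Matrix.mul_smul, Matrix.smul_mul, Matrix.mul_sub, Matrix.sub_mul, hform, hJ,
    Complex.inv_I]
  module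

theorem stmt8_general (n : ℕ) (A B C D : Matrix (Fin n) (Fin n) ℂ)
    (hM : (Complex.I •
      ((Matrix.fromBlocks A B C D)ᴴ * J n * Matrix.fromBlocks A B C D - J n)).PosSemidef)
    (Z : Matrix (Fin n) (Fin n) ℂ) (hZ : InSiegel Z) :
    (Complex.I⁻¹ •
      ((C * Z + D)ᴴ * (A * Z + B) - (A * Z + B)ᴴ * (C * Z + D))).PosDef := by
  rw [inv_I_smul_sub_eq_add_conjTranspose_mul_mul]
  exact hZ.posDef_inv_I_smul_sub_conjTranspose.add_posSemidef
    (hM.conjTranspose_mul_mul_same _)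

theorem stmt8 (n : ℕ) (A B C D : Matrix (Fin n) (Fin n) ℂ)
    (hS : (Matrix.fromBlocks A B C D)ᵀ * J n * Matrix.fromBlocks A B C D = J n)
    (hM : (Complex.I •
      ((Matrix.fromBlocks A B C D)ᴴ * J n * Matrix.fromBlocks A B C D - J n)).PosSemidef)
    (Z : Matrix (Fin n) (Fin n) ℂ) (hZ : InSiegel Z) :
    (Complex.I⁻¹ •
      ((C * Z + D)ᴴ * (A * Z + B) - (A * Z + B)ᴴ * (C * Z + D))).PosDef :=
  stmt8_general n A B C D hM Z hZ
end
end

section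
/- A 2n×2n self-adjoint block matrix M = [[α,β],[β*,γ]] is positive semidefinite if and only if α ≥ 0, (I - αα†)β = 0, and γ - β*α†β ≥ 0, where α† is the Moore–Penrose pseudoinverse of α. -/
open Matrix
open scoped ComplexOrder

noncomputable section

/-- `Ad` is the Moore–Penrose pseudoinverse of `A`. -/
def IsMoorePenrose {n : ℕ} (A Ad : Matrix (Fin n) (Fin n) ℂ) : Prop :=
  A * Ad * A = A ∧ Ad * A * Ad = Ad ∧ (A * Ad)ᴴ = A * Ad ∧ (Ad * A)ᴴ = Ad * A

/-
If `α α† β = β`, i.e. the columns of `β` lie in the range of `α`, then `M` is congruent, via the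
invertible matrix `[[1, α† β], [0, 1]]`, to `diag(α, γ - β* α† β)`, so `M ≥ 0` iff both diagonal
blocks are. The range condition is itself forced by `M ≥ 0`: a positive semidefinite matrix
annihilates every vector on which its quadratic form vanishes, so `ker α ⊆ ker β*`, and
`1 - α α†` maps into `ker α`.
-/

namespace Matrix

variable {m n k R 𝕜 : Type*} [Fintype m] [Fintype n]

theorem PosSemidef.mul_eq_zero_of_conjTranspose_mul_mul_eq_zero [RCLike 𝕜] {M : Matrix m m 𝕜}
    (hM : M.PosSemidef) {W : Matrix m k 𝕜} (h : Wᴴ * M * W = 0) : M * W = 0 := by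
  classical
  open scoped MatrixOrder in
  obtain ⟨B, rfl⟩ := CStarAlgebra.nonneg_iff_eq_star_mul_self.mp hM.nonneg
  have hBW : B * W = 0 := by
    rw [← conjTranspose_mul_self_eq_zero]
    simpa [star_eq_conjTranspose, Matrix.mul_assoc] using h
  rw [star_eq_conjTranspose, Matrix.mul_assoc, hBW, Matrix.mul_zero]

theorem PosSemidef.conjTranspose_mul_eq_zero_of_mul_eq_zero [RCLike 𝕜] {A : Matrix m m 𝕜}
    {B : Matrix m n 𝕜} {D : Matrix n n 𝕜} (hM : (fromBlocks A B Bᴴ D).PosSemidef)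
    {X : Matrix m k 𝕜} (hX : A * X = 0) : Bᴴ * X = 0 := by
  have hMX := hM.mul_eq_zero_of_conjTranspose_mul_mul_eq_zero (W := fromRows X 0) <| by
    rw [Matrix.mul_assoc, fromBlocks_mul_fromRows, conjTranspose_fromRows_eq_fromCols_conjTranspose,
      fromCols_mul_fromRows, hX]
    simp
  rw [fromBlocks_mul_fromRows, ← fromRows_zero, fromRows_inj.eq_iff] at hMX
  simpa using hMX.2

theorem posSemidef_fromBlocks_zero_iff [Ring R] [PartialOrder R] [StarRing R] [AddLeftMono R]
    {A : Matrix m m R} {D : Matrix n n R} :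
    (fromBlocks A 0 0 D).PosSemidef ↔ A.PosSemidef ∧ D.PosSemidef := by
  classical
  refine ⟨fun h ↦ ⟨h.submatrix Sum.inl, h.submatrix Sum.inr⟩, fun ⟨hA, hD⟩ ↦ ?_⟩
  convert (hA.conjTranspose_mul_mul_same (fromCols 1 (0 : Matrix m n R))).add
    (hD.conjTranspose_mul_mul_same (fromCols (0 : Matrix n m R) 1)) using 1
  simp only [conjTranspose_fromCols_eq_fromRows_conjTranspose, fromRows_mul]
  ext (i | i) (j | j) <;> simp

section Congruence

variable [DecidableEq m] [DecidableEq n]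

/-- `G` plays the role of `A⁻¹` in the block `LDLᴴ` factorization. -/
theorem fromBlocks_eq_conjTranspose_mul_fromBlocks_zero_mul [Ring R] [StarRing R]
    {A G : Matrix m m R} {B : Matrix m n R} (hA : A.IsHermitian) (hB : A * G * B = B)
    (D : Matrix n n R) :
    fromBlocks A B Bᴴ D = (fromBlocks 1 (G * B) 0 1)ᴴ * fromBlocks A 0 0 (D - Bᴴ * G * B) *
      fromBlocks 1 (G * B) 0 1 := by
  have hBA : (G * B)ᴴ * A = Bᴴ := by
    simpa [conjTranspose_mul, hA.eq, Matrix.mul_assoc] using congrArg conjTranspose hB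
  rw [fromBlocks_conjTranspose, fromBlocks_multiply, fromBlocks_multiply]
  simp only [conjTranspose_one, conjTranspose_zero, Matrix.mul_zero, Matrix.zero_mul,
    Matrix.one_mul, Matrix.mul_one, add_zero, zero_add, hBA, ← Matrix.mul_assoc, hB]
  rw [add_sub_cancel]

theorem posSemidef_fromBlocks_iff_of_mul_mul_eq [CommRing R] [PartialOrder R] [StarRing R]
    [AddLeftMono R] {A G : Matrix m m R} {B : Matrix m n R} (hA : A.IsHermitian)
    (hB : A * G * B = B) (D : Matrix n n R) :
    (fromBlocks A B Bᴴ D).PosSemidef ↔ A.PosSemidef ∧ (D - Bᴴ * G * B).PosSemidef := by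
  rw [fromBlocks_eq_conjTranspose_mul_fromBlocks_zero_mul hA hB, ← star_eq_conjTranspose,
    (isUnit_fromBlocks_zero₂₁.mpr ⟨isUnit_one, isUnit_one⟩).posSemidef_star_left_conjugate_iff,
    posSemidef_fromBlocks_zero_iff]

end Congruence

end Matrix

theorem IsMoorePenrose.conjTranspose_one_sub_mul {n : ℕ} {A Ad : Matrix (Fin n) (Fin n) ℂ}
    (h : IsMoorePenrose A Ad) : (1 - A * Ad)ᴴ = 1 - A * Ad := by
  rw [conjTranspose_sub, conjTranspose_one, h.2.2.1]

theorem IsMoorePenrose.mul_one_sub_mul_eq_zero {n : ℕ} {A Ad : Matrix (Fin n) (Fin n) ℂ}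
    (hA : A.IsHermitian) (h : IsMoorePenrose A Ad) : A * (1 - A * Ad) = 0 := by
  calc A * (1 - A * Ad) = ((1 - A * Ad) * A)ᴴ := by
        rw [conjTranspose_mul, h.conjTranspose_one_sub_mul, hA.eq]
    _ = 0 := by rw [Matrix.sub_mul, Matrix.one_mul, h.1, sub_self, conjTranspose_zero]

theorem stmt12_general (n : ℕ) (α β γ αd : Matrix (Fin n) (Fin n) ℂ)
    (hα : αᴴ = α) (hαd : IsMoorePenrose α αd) :
    (Matrix.fromBlocks α β βᴴ γ).PosSemidef ↔
      α.PosSemidef ∧ (1 - α * αd) * β = 0 ∧ (γ - βᴴ * αd * β).PosSemidef := by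
  have hrange : (1 - α * αd) * β = 0 ↔ α * αd * β = β := by
    rw [Matrix.sub_mul, Matrix.one_mul, sub_eq_zero, eq_comm]
  constructor
  · intro hM
    have hβ : (1 - α * αd) * β = 0 := by
      rw [← conjTranspose_eq_zero, conjTranspose_mul, hαd.conjTranspose_one_sub_mul]
      exact hM.conjTranspose_mul_eq_zero_of_mul_eq_zero (hαd.mul_one_sub_mul_eq_zero hα)
    obtain ⟨hpα, hS⟩ := (posSemidef_fromBlocks_iff_of_mul_mul_eq hα (hrange.mp hβ) γ).mp hM
    exact ⟨hpα, hβ, hS⟩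
  · rintro ⟨hpα, hβ, hS⟩
    exact (posSemidef_fromBlocks_iff_of_mul_mul_eq hα (hrange.mp hβ) γ).mpr ⟨hpα, hS⟩

theorem stmt12 (n : ℕ) (α β γ αd : Matrix (Fin n) (Fin n) ℂ)
    (hα : αᴴ = α) (hγ : γᴴ = γ) (hαd : IsMoorePenrose α αd) :
    (Matrix.fromBlocks α β βᴴ γ).PosSemidef ↔
      α.PosSemidef ∧ (1 - α * αd) * β = 0 ∧ (γ - βᴴ * αd * β).PosSemidef :=
  stmt12_general n α β γ αd hα hαd
end
end
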